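/- arXiv:2508.12924 — 3 statements merged into one kernel-verified Lean document; each statement's English description precedes it below -/
import Mathlib

section
/- For every positive integer n, the map ψ⁺ sending the necklace ⟨s⟩ to the necklace inversion class [Ξ(s)] is a well-defined bijection from Ñ⁺(n) onto N̄(n); that is: (i) if s and s′ generate the same necklace in Ñ⁺(n), then Ξ(s) and Ξ(s′) lie in the same necklace inversion class; (ii) for every ⟨s⟩ ∈ Ñ⁺(n), the string Ξ(s) is primitive of length n; and (iii) every class in N̄(n) equals [Ξ(s)] for exactly one necklace ⟨s⟩ ∈ Ñ⁺(n). -/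
open Finset

namespace Necklaces

variable {n : ℕ}

/-- The cyclic left shift `L` on binary strings of length `n`. -/
def shiftL (s : Fin n → Bool) : Fin n → Bool :=
  fun i => s ⟨(i.val + 1) % n, Nat.mod_lt _ (Nat.lt_of_le_of_lt (Nat.zero_le _) i.isLt)⟩

/-- Digitwise inversion (complement) `ι`. -/
def inv (s : Fin n → Bool) : Fin n → Bool := fun i => !(s i)

/-- A string is primitive if no nontrivial cyclic shift fixes it. -/
def Primitive (s : Fin n → Bool) : Prop :=
  ∀ k : ℕ, 0 < k → k < n → shiftL^[k] s ≠ s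

/-- The necklace `⟨s⟩`: the orbit of `s` under cyclic shifts. -/
def necklace (s : Fin n → Bool) : Set (Fin n → Bool) :=
  {t | ∃ k : ℕ, t = shiftL^[k] s}

/-- The necklace inversion class `[s]`: the orbit of `s` under cyclic shifts and inversion. -/
def invClass (s : Fin n → Bool) : Set (Fin n → Bool) :=
  {t | ∃ k : ℕ, t = shiftL^[k] s ∨ t = inv (shiftL^[k] s)}

/-- The number of 1's in `s`. -/
def onesCard (s : Fin n → Bool) : ℕ := (univ.filter (fun i => s i = true)).card

/-- The mod-2 partial sum map `Ξ`: the `i`-th digit of `Ξ(s)` is `s₁+⋯+sᵢ (mod 2)`. -/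
def xi (s : Fin n → Bool) : Fin n → Bool :=
  fun i => decide (Odd ((Finset.Iic i).filter (fun j => s j = true)).card)

/-- `ι(s)` is a cyclic shift of `s`. -/
def ReflexiveStr (s : Fin n → Bool) : Prop := ∃ k : ℕ, shiftL^[k] s = inv s

/-- `s` consists of two copies of a primitive string of length `n/2`
with an odd number of 1's. -/
def TwoCopies (s : Fin n → Bool) : Prop :=
  n % 2 = 0 ∧ shiftL^[n / 2] s = s ∧ (∀ k : ℕ, 0 < k → k < n / 2 → shiftL^[k] s ≠ s) ∧
    Odd ((univ.filter (fun i : Fin n => i.val < n / 2 ∧ s i = true)).card)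

/-- `s` generates a necklace belonging to `Ñ⁺(n)`. -/
def GoodPlus (s : Fin n → Bool) : Prop :=
  (Primitive s ∧ Even (onesCard s)) ∨ TwoCopies s

/-- The set `Ñ⁺(n)` of necklaces. -/
def NtildePlus (n : ℕ) : Set (Set (Fin n → Bool)) :=
  {N | ∃ s : Fin n → Bool, GoodPlus s ∧ N = necklace s}

/-- The set `N̄(n)` of necklace inversion classes of primitive strings. -/
def Nbar (n : ℕ) : Set (Set (Fin n → Bool)) :=
  {C | ∃ s : Fin n → Bool, Primitive s ∧ C = invClass s}

/-- Lexicographic order on strings, with `0 < 1` and the leftmost digit most significant. -/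
def strLt (s t : Fin n → Bool) : Prop :=
  ∃ i : Fin n, (∀ j : Fin n, j < i → s j = t j) ∧ s i < t i

/-- Extended lexicographic order on extended strings `s^b`
(`b = false` encodes `−`, `b = true` encodes `+`). -/
def extLt (p q : (Fin n → Bool) × Bool) : Prop :=
  strLt p.1 q.1 ∨ (p.1 = q.1 ∧ p.2 < q.2)

/-- The twisted shift operator `F`. -/
def twistF (s : Fin n → Bool) : Fin n → Bool :=
  if h : 0 < n then
    (if shiftL s ⟨0, h⟩ = true then shiftL s else inv (shiftL s))
  else s

/-- The extended twisted shift operator `F̃`. -/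
def extF (p : (Fin n → Bool) × Bool) : (Fin n → Bool) × Bool :=
  if h : 0 < n then
    (if twistF p.1 ⟨n - 1, Nat.sub_lt h Nat.one_pos⟩ = true then (twistF p.1, p.2)
     else (twistF p.1, !p.2))
  else p

/-- Cyclic successor on `Fin n`. -/
def finSucc (i : Fin n) : Fin n :=
  ⟨(i.val + 1) % n, Nat.mod_lt _ (Nat.lt_of_le_of_lt (Nat.zero_le _) i.isLt)⟩

open scoped Classical in
/-- The (0-based) lexicographic rank of `μ i` among `μ₁,…,μₙ`:
the number of indices `j` with `μ j` strictly smaller than `μ i`. -/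
noncomputable def rankOf {X : Type*} (lt : X → X → Prop) (μ : Fin n → X) (i : Fin n) : ℕ :=
  (univ.filter (fun j => lt (μ j) (μ i))).card

/-- `σ` is the cyclic permutation `(r₁ r₂ ⋯ rₙ)` built from the ranks `rᵢ` of `μᵢ`:
`σ(rᵢ) = r_{i+1}` (indices mod `n`). -/
def BuiltFrom {X : Type*} (lt : X → X → Prop) (μ : Fin n → X) (σ : Equiv.Perm (Fin n)) : Prop :=
  ∀ i j : Fin n, rankOf lt μ i = j.val → (σ j).val = rankOf lt μ (finSucc i)

/-- `σ` consists of a single `n`-cycle. -/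
def IsCyclicPerm (σ : Equiv.Perm (Fin n)) : Prop :=
  ∀ x y : Fin n, ∃ k : ℕ, (σ ^ k) x = y

/-- `σ` is unimodal: decreasing on an initial segment, then increasing. -/
def IsUnimodal (σ : Equiv.Perm (Fin n)) : Prop :=
  ∃ m : Fin n, (∀ i j : Fin n, i ≤ j → j ≤ m → σ j ≤ σ i) ∧
    (∀ i j : Fin n, m ≤ i → i ≤ j → σ i ≤ σ j)

/-- Cyclic unimodal permutations. -/
def CUPperm (σ : Equiv.Perm (Fin n)) : Prop := IsCyclicPerm σ ∧ IsUnimodal σ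

/-- The string `A(σ)` obtained from the itinerary of `σ` (`+ ↦ 0`, `− ↦ 1`),
with the last digit chosen so that the total number of 1's is even.
(Here `m = σ⁻¹ 0` is the unique element with `σ m` least.) -/
def Astr [NeZero n] (σ : Equiv.Perm (Fin n)) : Fin n → Bool :=
  fun i =>
    if i.val + 1 < n then decide ((σ ^ (i.val + 1)) (σ⁻¹ 0) < σ⁻¹ 0)
    else decide (Odd ((univ.filter (fun j : Fin n =>
      j.val + 1 < n ∧ (σ ^ (j.val + 1)) (σ⁻¹ 0) < σ⁻¹ 0)).card))

/-- The string used for `Ψ(σ)`: itinerary digits with the last digit chosen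
so that the total number of 1's is odd. -/
def BstrOdd [NeZero n] (σ : Equiv.Perm (Fin n)) : Fin n → Bool :=
  fun i =>
    if i.val + 1 < n then decide ((σ ^ (i.val + 1)) (σ⁻¹ 0) < σ⁻¹ 0)
    else !(decide (Odd ((univ.filter (fun j : Fin n =>
      j.val + 1 < n ∧ (σ ^ (j.val + 1)) (σ⁻¹ 0) < σ⁻¹ 0)).card)))

/-- The itinerary of a cyclic unimodal permutation: `none` encodes `⋆` (position `n`),
`some true` encodes `−` (i.e. `σⁱ(m) < m`), `some false` encodes `+` (i.e. `σⁱ(m) > m`). -/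
def itin [NeZero n] (σ : Equiv.Perm (Fin n)) : Fin n → Option Bool :=
  fun i =>
    if i.val + 1 = n then none
    else some (decide ((σ ^ (i.val + 1)) (σ⁻¹ 0) < σ⁻¹ 0))

/-- `σ` arises from the class `C` by the construction defining `λ`:
for some representative `t` of `C` beginning with `1`, `σ` is the cyclic permutation
built from the lexicographic ranks of the iterates of `t` under `F` (non-reflexive case)
or of `t^−` under `F̃` (reflexive case). -/
def LamRel [NeZero n] (C : Set (Fin n → Bool)) (σ : Equiv.Perm (Fin n)) : Prop :=
  ∃ t : Fin n → Bool, t 0 = true ∧ C = invClass t ∧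
    ((¬ ReflexiveStr t ∧ BuiltFrom strLt (fun i : Fin n => twistF^[i.val] t) σ) ∨
     (ReflexiveStr t ∧ BuiltFrom extLt (fun i : Fin n => extF^[i.val] (t, false)) σ))

/-- `σ` arises from the representative `s` by the Weiss–Rogers construction `Φ`:
`σ` is the cyclic permutation built from the lexicographic ranks of
`νᵢ = ι(Ξ(L^{i-1}(s)))`. -/
def PhiBuilt (s : Fin n → Bool) (σ : Equiv.Perm (Fin n)) : Prop :=
  BuiltFrom strLt (fun i : Fin n => inv (xi (shiftL^[i.val] s))) σ

end Necklaces

/-!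
Let `δ(t)ᵢ = tᵢ + tᵢ₋₁` (indices mod `n`) be the cyclic difference operator. It commutes with `L`,
is invariant under `ι`, identifies exactly the strings that agree up to `ι`, and undoes `Ξ` on
strings with an even number of 1's. Hence for such strings `Ξ(s)` and `Ξ(s')` lie in the same
inversion class iff `s` and `s'` lie in the same necklace, and `Lᵏ Ξ(s) ∈ {Ξ(s), ι Ξ(s)}` iff
`Lᵏ s = s`, the second case occurring iff `s` has an odd number of 1's among its first `k` digits.
So `Ξ(s)` is primitive iff `s` is primitive, or has minimal period `n/2` with an odd number of 1's
in each half: this is exactly `Ñ⁺(n)`. Finally every inversion class has a representative `t`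
ending in `0`, and then `t = Ξ(δ(t))`.
-/

open Function Fin.CommRing

theorem Function.minimalPeriod_eq_iff_of_pos {α : Type*} {f : α → α} {x : α} {p : ℕ}
    (hp : 0 < p) :
    minimalPeriod f x = p ↔ IsPeriodicPt f p x ∧ ∀ k, 0 < k → k < p → ¬IsPeriodicPt f k x := by
  refine ⟨fun h => h ▸ ⟨isPeriodicPt_minimalPeriod f x,
    fun _ hk hlt => not_isPeriodicPt_of_pos_of_lt_minimalPeriod hk.ne' hlt⟩,
    fun ⟨hper, hmin⟩ => le_antisymm (hper.minimalPeriod_le hp) (not_lt.1 fun hlt => ?_)⟩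
  exact hmin _ (hper.minimalPeriod_pos hp) hlt (isPeriodicPt_minimalPeriod f x)

namespace Necklaces

variable {n : ℕ}

@[simp]
theorem inv_inv (s : Fin n → Bool) : inv (inv s) = s :=
  funext fun i => Bool.not_not (s i)

theorem shiftL_iterate_inv (s : Fin n → Bool) (k : ℕ) :
    shiftL^[k] (inv s) = inv (shiftL^[k] s) := by
  induction k generalizing s with
  | zero => rfl
  | succ k ih => exact ih (shiftL s)

theorem Primitive.inv {s : Fin n → Bool} (h : Primitive s) : Primitive (inv s) :=
  fun k hk0 hkn heq => h k hk0 hkn <| by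
    rw [← inv_inv (shiftL^[k] s), ← shiftL_iterate_inv, heq, inv_inv]

theorem mem_necklace_self (s : Fin n → Bool) : s ∈ necklace s := ⟨0, rfl⟩

theorem mem_invClass_self (s : Fin n → Bool) : s ∈ invClass s := ⟨0, .inl rfl⟩

theorem xi_apply (s : Fin n → Bool) (i : Fin n) :
    xi s i = xor (decide (Odd #{j ∈ Iio i | s j = true})) (s i) := by
  rw [xi, ← Iio_insert, filter_insert]
  cases h : s i
  · simp
  · rw [if_pos rfl, card_insert_of_notMem (by simp)]
    simp [Nat.odd_add_one, ← Nat.not_even_iff_odd]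

variable [NeZero n]

theorem shiftL_iterate_apply (s : Fin n → Bool) (k : ℕ) (i : Fin n) :
    shiftL^[k] s i = s (i + k) := by
  induction k generalizing s with
  | zero => simp
  | succ k ih =>
    rw [iterate_succ_apply, ih]
    simp only [shiftL, Nat.cast_succ, ← add_assoc]
    congr 1
    ext
    simp [Fin.val_add]

theorem isPeriodicPt_shiftL (s : Fin n → Bool) : IsPeriodicPt shiftL n s :=
  funext fun i => by simp [shiftL_iterate_apply]

theorem primitive_iff_minimalPeriod_eq {s : Fin n → Bool} :
    Primitive s ↔ minimalPeriod shiftL s = n := by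
  rw [minimalPeriod_eq_iff_of_pos (NeZero.pos n)]
  exact ⟨fun h => ⟨isPeriodicPt_shiftL s, h⟩, fun h => h.2⟩

theorem twoCopies_iff {s : Fin n → Bool} :
    TwoCopies s ↔ n % 2 = 0 ∧ minimalPeriod shiftL s = n / 2 ∧
      Odd #{i : Fin n | i.val < n / 2 ∧ s i = true} := by
  have hn := NeZero.pos n
  constructor
  · rintro ⟨h2, hper, hmin, hodd⟩
    exact ⟨h2, (minimalPeriod_eq_iff_of_pos (by omega)).2 ⟨hper, hmin⟩, hodd⟩
  · rintro ⟨h2, hd, hodd⟩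
    obtain ⟨hper, hmin⟩ := (minimalPeriod_eq_iff_of_pos (by omega)).1 hd
    exact ⟨h2, hper, hmin, hodd⟩

theorem exists_shiftL_iterate_eq (s : Fin n → Bool) (j k : ℕ) :
    ∃ m, shiftL^[m] (shiftL^[k] s) = shiftL^[j] s := by
  refine ⟨j + (n - 1) * k, ?_⟩
  have hk : j + (n - 1) * k + k = j + n * k := by
    have : k ≤ n * k := Nat.le_mul_of_pos_left k (NeZero.pos n)
    rw [Nat.sub_one_mul]
    omega
  rw [← iterate_add_apply, hk, iterate_add_apply, ((isPeriodicPt_shiftL s).mul_const k).eq]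

theorem necklace_eq_of_mem {s t : Fin n → Bool} (h : t ∈ necklace s) :
    necklace t = necklace s := by
  obtain ⟨k, rfl⟩ := h
  ext u
  constructor
  · rintro ⟨j, rfl⟩
    exact ⟨j + k, (iterate_add_apply ..).symm⟩
  · rintro ⟨j, rfl⟩
    obtain ⟨m, hm⟩ := exists_shiftL_iterate_eq s j k
    exact ⟨m, hm.symm⟩

theorem invClass_eq_of_mem {s t : Fin n → Bool} (h : t ∈ invClass s) :
    invClass t = invClass s := by
  ext u
  constructor
  · rintro ⟨j, hj⟩
    obtain ⟨k, rfl | rfl⟩ := h <;>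
    · refine ⟨j + k, ?_⟩
      simp only [iterate_add_apply, shiftL_iterate_inv, inv_inv] at hj ⊢
      tauto
  · rintro ⟨j, rfl | rfl⟩ <;>
    · obtain ⟨k, rfl | rfl⟩ := h <;>
      · obtain ⟨m, hm⟩ := exists_shiftL_iterate_eq s j k
        refine ⟨m, ?_⟩
        simp only [shiftL_iterate_inv, inv_inv, hm]
        tauto

theorem xi_zero (s : Fin n → Bool) : xi s 0 = s 0 := by
  have : Iio (0 : Fin n) = ∅ := by ext; simp
  simp [xi_apply, this]

theorem xi_of_ne_zero (s : Fin n → Bool) {i : Fin n} (hi : i ≠ 0) :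
    xi s i = xor (xi s (i - 1)) (s i) := by
  have : Iio i = Iic (i - 1) := by
    ext j
    simp only [mem_Iio, mem_Iic, Fin.lt_def, Fin.le_def, Fin.val_sub_one_of_ne_zero hi]
    have := Fin.pos_iff_ne_zero.2 hi
    omega
  rw [xi_apply, this, xi]

theorem xi_neg_one (s : Fin n → Bool) : xi s (-1) = decide (Odd (onesCard s)) := by
  have : Iic (-1 : Fin n) = univ := by
    obtain ⟨m, rfl⟩ := Nat.exists_eq_succ_of_ne_zero (NeZero.ne n)
    ext j
    simp only [mem_Iic, mem_univ, iff_true, Fin.le_def, Fin.coe_neg_one]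
    omega
  rw [xi, this, onesCard]

def cycDiff (t : Fin n → Bool) : Fin n → Bool := fun i => xor (t i) (t (i - 1))

theorem cycDiff_inv (t : Fin n → Bool) : cycDiff (inv t) = cycDiff t :=
  funext fun i => Bool.not_xor_not (t i) (t (i - 1))

theorem cycDiff_shiftL_iterate (t : Fin n → Bool) (k : ℕ) :
    cycDiff (shiftL^[k] t) = shiftL^[k] (cycDiff t) := by
  funext i
  simp only [cycDiff, shiftL_iterate_apply, sub_add_eq_add_sub]

theorem cycDiff_xi {s : Fin n → Bool} (hs : Even (onesCard s)) : cycDiff (xi s) = s := by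
  funext i
  rcases eq_or_ne i 0 with rfl | hi
  · rw [cycDiff, zero_sub, xi_neg_one, decide_eq_false (Nat.not_odd_iff_even.2 hs), xi_zero,
      Bool.xor_false]
  · simp [cycDiff, xi_of_ne_zero s hi, Bool.xor_comm (xi s (i - 1))]

theorem xi_cycDiff (t : Fin n → Bool) (i : Fin n) : xi (cycDiff t) i = xor (t i) (t (-1)) := by
  induction i using WellFoundedLT.induction with
  | _ i ih =>
    rcases eq_or_ne i 0 with rfl | hi
    · rw [xi_zero, cycDiff, zero_sub]
    · have hlt : i - 1 < i := by
        rw [Fin.lt_def, Fin.val_sub_one_of_ne_zero hi]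
        exact Nat.sub_lt (Fin.pos_iff_ne_zero.2 hi) one_pos
      simp [xi_of_ne_zero _ hi, ih _ hlt, cycDiff, Bool.xor_comm, Bool.xor_left_comm]

theorem eq_or_eq_inv_of_cycDiff_eq {u v : Fin n → Bool} (h : cycDiff u = cycDiff v) :
    u = v ∨ u = inv v := by
  have key (i : Fin n) : u i = xor (v i) (xor (v (-1)) (u (-1))) := by
    rw [← Bool.xor_assoc, ← xi_cycDiff, ← h, xi_cycDiff, Bool.xor_assoc, Bool.xor_self,
      Bool.xor_false]
  cases hc : xor (v (-1)) (u (-1))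
  · exact .inl <| funext fun i => by rw [key, hc, Bool.xor_false]
  · exact .inr <| funext fun i => by rw [key, hc, Bool.xor_true, inv]

theorem mem_invClass_xi_iff {s s' : Fin n → Bool} (hs : Even (onesCard s))
    (hs' : Even (onesCard s')) : xi s ∈ invClass (xi s') ↔ s ∈ necklace s' := by
  constructor
  · rintro ⟨k, h | h⟩ <;> refine ⟨k, ?_⟩ <;> have := congrArg cycDiff h
    · rwa [cycDiff_xi hs, cycDiff_shiftL_iterate, cycDiff_xi hs'] at this
    · rwa [cycDiff_xi hs, cycDiff_inv, cycDiff_shiftL_iterate, cycDiff_xi hs'] at this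
  · rintro ⟨k, rfl⟩
    refine ⟨k, eq_or_eq_inv_of_cycDiff_eq ?_⟩
    rw [cycDiff_xi hs, cycDiff_shiftL_iterate, cycDiff_xi hs']

theorem isPeriodicPt_of_isPeriodicPt_xi {s : Fin n → Bool} {k : ℕ} (hs : Even (onesCard s))
    (h : IsPeriodicPt shiftL k (xi s)) : IsPeriodicPt shiftL k s := by
  have := congrArg cycDiff h.eq
  rwa [cycDiff_shiftL_iterate, cycDiff_xi hs] at this

theorem shiftL_iterate_xi_eq_or_eq_inv {s : Fin n → Bool} {k : ℕ} (hs : Even (onesCard s))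
    (h : IsPeriodicPt shiftL k s) :
    shiftL^[k] (xi s) = xi s ∨ shiftL^[k] (xi s) = inv (xi s) :=
  eq_or_eq_inv_of_cycDiff_eq (by rw [cycDiff_shiftL_iterate, cycDiff_xi hs, h.eq])

theorem shiftL_iterate_xi_apply_zero {s : Fin n → Bool} {d : ℕ}
    (h : IsPeriodicPt shiftL d s) (hd : d < n) :
    shiftL^[d] (xi s) 0 = xor (decide (Odd #{i : Fin n | i.val < d ∧ s i = true})) (xi s 0) := by
  have hfilter : ({j ∈ Iio (d : Fin n) | s j = true} : Finset (Fin n)) =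
      ({i : Fin n | i.val < d ∧ s i = true} : Finset (Fin n)) := by
    ext j
    simp [Fin.lt_def, Fin.val_natCast, Nat.mod_eq_of_lt hd]
  have hsd : s d = s 0 := by simpa [shiftL_iterate_apply] using congrFun h.eq 0
  rw [shiftL_iterate_apply, zero_add, xi_apply, hfilter, hsd, xi_zero]

theorem onesCard_eq_two_mul_of_isPeriodicPt {s : Fin n → Bool} {d : ℕ}
    (h : IsPeriodicPt shiftL d s) (hn : d + d = n) :
    onesCard s = 2 * #{i : Fin n | i.val < d ∧ s i = true} := by
  have hdn : d < n := by have := NeZero.pos n; omega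
  have hswap : #{i : Fin n | ¬i.val < d ∧ s i = true} = #{i : Fin n | i.val < d ∧ s i = true} := by
    refine card_equiv (Equiv.addRight (d : Fin n)) fun i => ?_
    have hsi : s (i + d) = s i := by simpa [shiftL_iterate_apply] using congrFun h.eq i
    have hlt : (i + d : Fin n).val < d ↔ ¬i.val < d := by
      rw [Fin.val_add_eq_ite, Fin.val_natCast, Nat.mod_eq_of_lt hdn]
      split_ifs <;> omega
    simp only [mem_filter, mem_univ, true_and, Equiv.coe_addRight, hsi, hlt]
  rw [onesCard, ← card_filter_add_card_filter_not (fun i : Fin n => i.val < d),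
    filter_filter, filter_filter, two_mul]
  simp only [and_comm (a := s _ = true), hswap]

theorem TwoCopies.even_onesCard {s : Fin n → Bool} (h : TwoCopies s) : Even (onesCard s) := by
  obtain ⟨h2, hper, -, -⟩ := h
  rw [onesCard_eq_two_mul_of_isPeriodicPt hper (by omega)]
  exact even_two_mul _

theorem GoodPlus.even_onesCard {s : Fin n → Bool} : GoodPlus s → Even (onesCard s)
  | .inl h => h.2
  | .inr h => h.even_onesCard

theorem GoodPlus.primitive_xi {s : Fin n → Bool} (h : GoodPlus s) : Primitive (xi s) := by
  intro k hk0 hkn hxk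
  have hsk : IsPeriodicPt shiftL k s := isPeriodicPt_of_isPeriodicPt_xi h.even_onesCard hxk
  rcases h with ⟨hs, -⟩ | htc
  · exact hs k hk0 hkn hsk
  obtain ⟨h2, hd, hodd⟩ := twoCopies_iff.1 htc
  have hk : k = n / 2 :=
    Nat.eq_of_dvd_of_lt_two_mul hk0.ne' (hd ▸ hsk.minimalPeriod_dvd) (by omega)
  have h0 := shiftL_iterate_xi_apply_zero hsk hkn
  rw [hxk, hk, decide_eq_true hodd] at h0
  simp at h0

theorem goodPlus_of_primitive_xi {s : Fin n → Bool} (hs : Even (onesCard s))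
    (hp : Primitive (xi s)) : GoodPlus s := by
  set d := minimalPeriod shiftL s
  have hsd : IsPeriodicPt shiftL d s := isPeriodicPt_minimalPeriod shiftL s
  have hd0 : 0 < d := (isPeriodicPt_shiftL s).minimalPeriod_pos (NeZero.pos n)
  have hdn : d ≤ n := (isPeriodicPt_shiftL s).minimalPeriod_le (NeZero.pos n)
  rcases hdn.eq_or_lt with hdn | hdlt
  · exact .inl ⟨primitive_iff_minimalPeriod_eq.2 hdn, hs⟩
  rcases shiftL_iterate_xi_eq_or_eq_inv hs hsd with hxd | hxd
  · exact absurd hxd (hp d hd0 hdlt)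
  have h2d : IsPeriodicPt shiftL (d + d) (xi s) := by
    rw [IsPeriodicPt, IsFixedPt, iterate_add_apply, hxd, shiftL_iterate_inv, hxd, inv_inv]
  have hn2 : d + d = n := (Nat.eq_of_dvd_of_lt_two_mul (by omega)
    (primitive_iff_minimalPeriod_eq.1 hp ▸ h2d.minimalPeriod_dvd) (by omega))
  refine .inr (twoCopies_iff.2 ⟨by omega, by omega, by_contra fun hodd => ?_⟩)
  have h0 := shiftL_iterate_xi_apply_zero hsd hdlt
  rw [hxd, show d = n / 2 by omega] at h0
  simp [inv, hodd] at h0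

theorem exists_goodPlus_invClass_xi_eq {t : Fin n → Bool} (ht : Primitive t) :
    ∃ s, GoodPlus s ∧ invClass (xi s) = invClass t := by
  obtain ⟨t', ht', hlast, hclass⟩ :
      ∃ t', Primitive t' ∧ t' (-1) = false ∧ invClass t' = invClass t := by
    cases h : t (-1)
    · exact ⟨t, ht, h, rfl⟩
    · exact ⟨inv t, ht.inv, by simp [inv, h], invClass_eq_of_mem ⟨0, .inr rfl⟩⟩
  have hxi : xi (cycDiff t') = t' := funext fun i => by rw [xi_cycDiff, hlast, Bool.xor_false]
  have he : Even (onesCard (cycDiff t')) := by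
    have := xi_neg_one (cycDiff t')
    rw [hxi, hlast] at this
    simpa [Nat.not_odd_iff_even] using this.symm
  exact ⟨cycDiff t', goodPlus_of_primitive_xi he (by rwa [hxi]), by rw [hxi, hclass]⟩

/-- For every positive integer `n`, the map `ψ⁺` sending the necklace
`⟨s⟩` to the necklace inversion class `[Ξ(s)]` is a well-defined bijection from
`Ñ⁺(n)` onto `N̄(n)`: (i) representative independence, (ii) `Ξ(s)` is primitive,
(iii) every class in `N̄(n)` equals `[Ξ(s)]` for exactly one necklace `⟨s⟩ ∈ Ñ⁺(n)`. -/
theorem psiPlus_bijective (n : ℕ) (hn : 0 < n) :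
    (∀ s s' : Fin n → Bool, GoodPlus s → GoodPlus s' → necklace s = necklace s' →
      invClass (xi s) = invClass (xi s')) ∧
    (∀ s : Fin n → Bool, GoodPlus s → Primitive (xi s)) ∧
    (∀ C ∈ Nbar n, ∃! N : Set (Fin n → Bool),
      N ∈ NtildePlus n ∧
        ∃ s : Fin n → Bool, GoodPlus s ∧ N = necklace s ∧ C = invClass (xi s)) := by
  have : NeZero n := ⟨hn.ne'⟩
  refine ⟨fun s s' hs hs' hN => ?_, fun s hs => hs.primitive_xi, ?_⟩
  · have hmem : xi s' ∈ invClass (xi s) :=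
      (mem_invClass_xi_iff hs'.even_onesCard hs.even_onesCard).2 (hN ▸ mem_necklace_self s')
    exact (invClass_eq_of_mem hmem).symm
  rintro C ⟨t, ht, rfl⟩
  obtain ⟨s, hs, hst⟩ := exists_goodPlus_invClass_xi_eq ht
  refine ⟨necklace s, ⟨⟨s, hs, rfl⟩, s, hs, rfl, hst.symm⟩, ?_⟩
  rintro _ ⟨-, s₁, hs₁, rfl, hC⟩
  have hmem : s ∈ necklace s₁ := (mem_invClass_xi_iff hs.even_onesCard hs₁.even_onesCard).1
    (hC ▸ hst ▸ mem_invClass_self (xi s))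
  exact (necklace_eq_of_mem hmem).symm

end Necklaces
end

section
/- For every cyclic unimodal permutation σ of {1,…,n}, the binary string A(σ) is either primitive of length n (with an even number of 1's), or consists of two copies of a primitive string of length n/2 with an odd number of 1's; in other words, the necklace φ(σ) := ⟨A(σ)⟩ belongs to Ñ⁺(n). -/
open Finset

/-!
If `A(σ)` has a period `0 < p < n`, compare the minimum `σ(m) = 1` with the point `σ^{n-p+1}(m)`.
By periodicity the two points have the same itinerary for `p - 1` steps, after which they arrive
at `σ^p(m)` and `m`. As `σ` reverses the order left of `m` and preserves it right of `m`, their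
relative order flips once for every digit `1` met on the way; comparing the orders at both ends
shows that the first `p` digits of `A(σ)` contain an odd number of ones. If the minimal period `k`
of a non-primitive `A(σ)` were less than `n / 2`, then `2k` would be a period with an even number
of ones among its first `2k` digits; hence `n = 2k` and the first half has an odd number of ones.
-/

namespace Necklaces

open Function Fin.NatCast

section Strings

variable {n : ℕ} [NeZero n]

theorem shiftL_iterate_apply_natCast (s : Fin n → Bool) (k j : ℕ) :
    shiftL^[k] s (j : Fin n) = s ((j + k : ℕ) : Fin n) := by
  induction k generalizing s with
  | zero => rfl
  | succ k ih =>
    rw [iterate_succ_apply, ih]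
    simp only [shiftL]
    congr 1
    ext
    simp only [Fin.val_natCast, Nat.mod_add_mod, add_assoc]

theorem shiftL_iterate_self (s : Fin n → Bool) : shiftL^[n] s = s := by
  funext i
  rw [← Fin.cast_val_eq_self i, shiftL_iterate_apply_natCast]
  simp

theorem count_mul_of_shiftL_iterate_eq {s : Fin n → Bool} {k : ℕ} (hk : shiftL^[k] s = s)
    (b : ℕ) :
    Nat.count (fun j : ℕ => s (j : Fin n) = true) (b * k) =
      b * Nat.count (fun j : ℕ => s (j : Fin n) = true) k := by
  have hshift (j : ℕ) : s ((k + j : ℕ) : Fin n) = s j := by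
    rw [add_comm, ← shiftL_iterate_apply_natCast s k j, hk]
  induction b with
  | zero => simp
  | succ b ih =>
    rw [add_mul, one_mul, add_comm, Nat.count_add]
    simp only [hshift, ih]
    ring

theorem card_filter_val_lt_eq_count (s : Fin n → Bool) {p : ℕ} (hp : p ≤ n) :
    (univ.filter (fun i : Fin n => i.val < p ∧ s i = true)).card =
      Nat.count (fun j : ℕ => s (j : Fin n) = true) p := by
  rw [Nat.count_eq_card_filter_range]
  refine card_nbij' Fin.val (fun j => (j : Fin n)) (fun i hi => by simpa using hi)
    (fun j hj => ?_) (fun i _ => by simp) (fun j hj => ?_)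
  all_goals
    simp only [coe_filter, mem_range, Set.mem_ofPred_eq] at hj
    simp [Nat.mod_eq_of_lt (show j < n by omega), hj]

theorem primitive_or_twoCopies_of_odd_count {s : Fin n → Bool}
    (hodd : ∀ p, 0 < p → p < n → shiftL^[p] s = s →
      Odd (Nat.count (fun j : ℕ => s (j : Fin n) = true) p)) :
    Primitive s ∨ TwoCopies s := by
  by_cases hprim : Primitive s
  · exact Or.inl hprim
  right
  obtain ⟨p, hp0, hpn, hp⟩ : ∃ p, 0 < p ∧ p < n ∧ IsPeriodicPt shiftL p s := by
    simpa [Primitive, IsPeriodicPt, IsFixedPt] using hprim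
  set k := minimalPeriod shiftL s
  have hk0 : 0 < k := hp.minimalPeriod_pos hp0
  have hkn : k < n := (hp.minimalPeriod_le hp0).trans_lt hpn
  have hks : shiftL^[k] s = s := iterate_minimalPeriod
  have hns : IsPeriodicPt shiftL n s := shiftL_iterate_self s
  obtain ⟨r, hr⟩ : k ∣ n := hns.minimalPeriod_dvd
  have hn : n = 2 * k := by
    by_contra hne
    have hr3 : 3 ≤ r := by
      by_contra! h
      interval_cases r <;> omega
    have h2k : 2 * k < n := by rw [hr]; nlinarith
    have hodd2k := hodd (2 * k) (by omega) h2k (by rw [mul_comm, iterate_mul, iterate_fixed hks])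
    rw [count_mul_of_shiftL_iterate_eq hks] at hodd2k
    exact Nat.not_odd_iff_even.mpr (even_two_mul _) hodd2k
  have hhalf : n / 2 = k := by omega
  refine ⟨by omega, hhalf ▸ hks, fun j hj0 hjk hj => ?_, ?_⟩
  · exact not_isPeriodicPt_of_pos_of_lt_minimalPeriod hj0.ne' (hjk.trans_eq hhalf) hj
  · rw [hhalf, card_filter_val_lt_eq_count s hkn.le]
    exact hodd k hk0 hkn hks

end Strings

section Permutations

variable {n : ℕ} {σ : Equiv.Perm (Fin n)}

theorem IsCyclicPerm.minimalPeriod_eq (hσ : IsCyclicPerm σ) (x : Fin n) :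
    minimalPeriod σ x = n := by
  classical
  have horbit : MulAction.orbit (Subgroup.zpowers σ) x = Set.univ :=
    Set.eq_univ_of_forall fun y => by
      obtain ⟨k, rfl⟩ := hσ x y
      exact ⟨⟨σ ^ k, Subgroup.npow_mem_zpowers σ k⟩, rfl⟩
  have h := MulAction.minimalPeriod_eq_card σ x
  simp only [Equiv.Perm.smul_def] at h
  rw [h, Fintype.card_congr (Equiv.setCongr horbit), Fintype.card_setUniv, Fintype.card_fin]

theorem IsCyclicPerm.pow_apply_eq_self_iff (hσ : IsCyclicPerm σ) (x : Fin n) (d : ℕ) :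
    (σ ^ d) x = x ↔ n ∣ d := by
  rw [← Equiv.Perm.iterate_eq_pow]
  change IsPeriodicPt σ d x ↔ _
  rw [isPeriodicPt_iff_minimalPeriod_dvd, hσ.minimalPeriod_eq x]

variable [NeZero n]

theorem IsUnimodal.strictAntiOn_strictMonoOn (h : IsUnimodal σ) :
    StrictAntiOn σ (Set.Iic (σ⁻¹ 0)) ∧ StrictMonoOn σ (Set.Ici (σ⁻¹ 0)) := by
  obtain ⟨m, hdec, hinc⟩ := h
  have hm : m = σ⁻¹ 0 := by
    have hmin : σ m ≤ σ (σ⁻¹ 0) := by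
      rcases le_total (σ⁻¹ 0) m with hle | hle
      · exact hdec _ _ hle le_rfl
      · exact hinc _ _ le_rfl hle
    rw [Equiv.Perm.eq_inv_iff_eq]
    exact le_antisymm (hmin.trans_eq (σ.apply_symm_apply 0)) (Fin.zero_le _)
  subst hm
  exact ⟨AntitoneOn.strictAntiOn_of_injOn (fun i _ j hj hij => hdec i j hij hj) σ.injective.injOn,
    MonotoneOn.strictMonoOn_of_injOn (fun i hi j _ hij => hinc i j hi hij) σ.injective.injOn⟩

theorem IsUnimodal.apply_lt_apply_iff (h : IsUnimodal σ) {u v : Fin n} (huv : u ≠ v)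
    (hside : u < σ⁻¹ 0 ↔ v < σ⁻¹ 0) : σ u < σ v ↔ (u < v ↔ σ⁻¹ 0 ≤ u) := by
  have hvu : v < u ↔ ¬ u < v :=
    ⟨fun h' => not_lt.mpr h'.le, fun h' => huv.symm.lt_of_le (not_lt.mp h')⟩
  by_cases hu : u < σ⁻¹ 0
  · rw [h.strictAntiOn_strictMonoOn.1.lt_iff_gt hu.le (hside.mp hu).le]
    simpa only [not_le.mpr hu, iff_false] using hvu
  · have hv : σ⁻¹ 0 ≤ v := not_lt.mp (hside.not.mp hu)
    rw [h.strictAntiOn_strictMonoOn.2.lt_iff_lt (not_lt.mp hu) hv]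
    simp only [not_lt.mp hu, iff_true]

theorem IsUnimodal.pow_apply_lt_pow_apply_iff (h : IsUnimodal σ) {u v : Fin n} (huv : u ≠ v)
    {d : ℕ → Prop} [DecidablePred d] {N : ℕ} (hu : ∀ i < N, ((σ ^ i) u < σ⁻¹ 0 ↔ d i))
    (hv : ∀ i < N, ((σ ^ i) v < σ⁻¹ 0 ↔ d i)) :
    (σ ^ N) u < (σ ^ N) v ↔ (u < v ↔ Even (Nat.count d N)) := by
  induction N with
  | zero => simp
  | succ N ih =>
    have hne : (σ ^ N) u ≠ (σ ^ N) v := (σ ^ N).injective.ne huv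
    have hsame := (hu N N.lt_succ_self).trans (hv N N.lt_succ_self).symm
    rw [pow_succ', Equiv.Perm.mul_apply, Equiv.Perm.mul_apply, h.apply_lt_apply_iff hne hsame,
      ih (fun i hi => hu i (hi.trans N.lt_succ_self)) (fun i hi => hv i (hi.trans N.lt_succ_self)),
      Nat.count_succ]
    by_cases hN : (σ ^ N) u < σ⁻¹ 0
    · rw [if_pos ((hu N N.lt_succ_self).mp hN), Nat.even_add_one]
      have := not_le.mpr hN
      tauto
    · rw [if_neg (mt (hu N N.lt_succ_self).mpr hN), add_zero]
      have := not_lt.mp hN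
      tauto

end Permutations

section Itinerary

variable {n : ℕ} [NeZero n]

theorem Astr_apply_of_lt (σ : Equiv.Perm (Fin n)) {j : Fin n} (hj : j.val + 1 < n) :
    Astr σ j = decide ((σ ^ (j.val + 1)) (σ⁻¹ 0) < σ⁻¹ 0) :=
  if_pos hj

theorem even_onesCard_Astr (σ : Equiv.Perm (Fin n)) : Even (onesCard (Astr σ)) := by
  obtain ⟨N, rfl⟩ : ∃ N, n = N + 1 := Nat.exists_eq_succ_of_ne_zero (NeZero.ne n)
  set T := (univ.filter (fun j : Fin (N + 1) =>
      j.val + 1 < N + 1 ∧ (σ ^ (j.val + 1)) (σ⁻¹ 0) < σ⁻¹ 0)).card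
  have hinit (i : Fin N) :
      Astr σ i.castSucc = decide ((σ ^ (i.val + 1)) (σ⁻¹ 0) < σ⁻¹ 0) :=
    Astr_apply_of_lt σ (by simp)
  have hlast : Astr σ (Fin.last N) = decide (Odd T) := if_neg (by simp)
  have hT : T = ∑ i : Fin N, if (σ ^ (i.val + 1)) (σ⁻¹ 0) < σ⁻¹ 0 then 1 else 0 := by
    simp only [T, card_filter, Fin.sum_univ_castSucc, Fin.val_castSucc, Fin.val_last,
      lt_irrefl, false_and, if_false, add_zero, Nat.add_lt_add_iff_right, Fin.is_lt, true_and]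
  have hones : onesCard (Astr σ) = T + if Odd T then 1 else 0 := by
    rw [onesCard, card_filter, Fin.sum_univ_castSucc, hlast, hT]
    simp [hinit]
  rw [hones]
  rcases Nat.even_or_odd T with h | h
  · simpa [Nat.not_odd_iff_even.mpr h] using h
  · simp [h]

theorem CUPperm.odd_count_Astr_of_shiftL_iterate_eq {σ : Equiv.Perm (Fin n)} (hσ : CUPperm σ)
    {p : ℕ} (hp0 : 0 < p) (hpn : p < n) (hp : shiftL^[p] (Astr σ) = Astr σ) :
    Odd (Nat.count (fun j : ℕ => Astr σ (j : Fin n) = true) p) := by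
  obtain ⟨hcyc, huni⟩ := hσ
  set m := σ⁻¹ 0
  have horbit (i j : ℕ) : (σ ^ i) ((σ ^ j) m) = (σ ^ (i + j)) m := by
    rw [pow_add, Equiv.Perm.mul_apply]
  have hdigit (j : ℕ) (hj : j + 1 < n) : Astr σ (j : Fin n) = true ↔ (σ ^ (j + 1)) m < m := by
    have hj' : ((j : Fin n) : ℕ) = j := by rw [Fin.val_natCast, Nat.mod_eq_of_lt (by omega)]
    rw [Astr_apply_of_lt σ (by rwa [hj']), hj', decide_eq_true_iff]
  have hperiodic (j : ℕ) : Astr σ ((j + (n - p) : ℕ) : Fin n) = Astr σ j := by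
    have h := shiftL_iterate_apply_natCast (Astr σ) p (j + (n - p))
    rw [hp, show j + (n - p) + p = j + n by omega, Nat.cast_add j n, Fin.natCast_self,
      add_zero] at h
    exact h
  have hstart : (σ ^ 1) m = 0 := by rw [pow_one]; exact σ.apply_symm_apply 0
  have hlt : (σ ^ 1) m < (σ ^ (n - p + 1)) m := by
    refine lt_of_le_of_ne (hstart ▸ Fin.zero_le _) fun h => ?_
    have hdvd : n ∣ n - p := by
      rw [← hcyc.pow_apply_eq_self_iff ((σ ^ 1) m), horbit, ← h]
    exact absurd (Nat.le_of_dvd (by omega) hdvd) (by omega)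
  have key := huni.pow_apply_lt_pow_apply_iff hlt.ne
    (d := fun j : ℕ => Astr σ (j : Fin n) = true) (N := p - 1)
    (fun i hi => by rw [horbit, hdigit i (by omega)])
    (fun i hi => by
      rw [horbit, show i + (n - p + 1) = i + (n - p) + 1 by omega, ← hdigit _ (by omega),
        hperiodic])
  rw [horbit, horbit, show p - 1 + 1 = p by omega, show p - 1 + (n - p + 1) = n by omega,
    (hcyc.pow_apply_eq_self_iff m n).mpr dvd_rfl, iff_true_left hlt] at key
  obtain ⟨q, rfl⟩ : ∃ q, p = q + 1 := Nat.exists_eq_succ_of_ne_zero hp0.ne'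
  rw [Nat.count_succ]
  simp only [Nat.add_sub_cancel] at key
  by_cases hq : (σ ^ (q + 1)) m < m
  · rw [if_pos ((hdigit q (by omega)).mpr hq)]
    exact (key.mp hq).add_one
  · rw [if_neg (mt (hdigit q (by omega)).mp hq), add_zero]
    exact Nat.not_even_iff_odd.mp (mt key.mpr hq)

end Itinerary

/-- For every cyclic unimodal permutation `σ` of `{1,…,n}`, the binary
string `A(σ)` is either primitive of length `n` with an even number of 1's, or consists of
two copies of a primitive string of length `n/2` with an odd number of 1's; in other
words, the necklace `φ(σ) = ⟨A(σ)⟩` belongs to `Ñ⁺(n)`. -/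
theorem Astr_goodPlus (n : ℕ) [NeZero n] (σ : Equiv.Perm (Fin n)) (hσ : CUPperm σ) :
    GoodPlus (Astr σ) ∧ necklace (Astr σ) ∈ NtildePlus n := by
  have hgood : GoodPlus (Astr σ) :=
    (primitive_or_twoCopies_of_odd_count fun _ hp0 hpn hp =>
      hσ.odd_count_Astr_of_shiftL_iterate_eq hp0 hpn hp).imp_left
      fun hprim => ⟨hprim, even_onesCard_Astr σ⟩
  exact ⟨hgood, Astr σ, hgood, rfl⟩

end Necklaces
end

section
/- Let y ∈ [0,1/2] have primitive period m under the tent map T, with T-cycle C = {y, T(y), …, T^{m−1}(y)}. Then there exists x ∈ [0,1) that is periodic under the doubling map D with primitive period equal to m or 2m and whose D-cycle is mapped onto C by the folding map π; moreover, any two D-cycles of D-periodic points with this property either coincide or are mapped to each other by the involution I. -/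
namespace Necklaces

/-- The modified tent map `T′` on `[1/2,1]`. -/
noncomputable def tentT' (x : ℝ) : ℝ := if x ≤ 3 / 4 then 2 * (1 - x) else 2 * x - 1

/-- The extended modified tent map `T̃′` on `[1/2,1] × {+,−}`
(`true` encodes `+`, `false` encodes `−`). -/
noncomputable def extT' (p : ℝ × Bool) : ℝ × Bool :=
  if 3 / 4 < p.1 then (tentT' p.1, p.2) else (tentT' p.1, !p.2)

/-- The extended order: `x^a < y^b` iff `x < y`, or `x = y` and `a = −`, `b = +`. -/
def extRLt (p q : ℝ × Bool) : Prop := p.1 < q.1 ∨ (p.1 = q.1 ∧ p.2 < q.2)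

/-- The mod-1 doubling map `D(x) = 2x (mod 1)`. -/
noncomputable def Dmap (x : ℝ) : ℝ := Int.fract (2 * x)

/-- The tent map `T` on `[0,1/2]`. -/
noncomputable def Tmap (x : ℝ) : ℝ := if x ≤ 1 / 4 then 2 * x else 1 - 2 * x

/-- The involution `I : x ↦ −x (mod 1)` on `[0,1)`. -/
noncomputable def Imap (x : ℝ) : ℝ := if x = 0 then 0 else 1 - x

/-- The folding map `π(x) = min(x, 1−x)`. -/
noncomputable def fold (x : ℝ) : ℝ := min x (1 - x)

/-- The cycle (forward orbit) of `x` under `f`. -/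
def cycleSet (f : ℝ → ℝ) (x : ℝ) : Set ℝ := {y | ∃ k : ℕ, y = f^[k] x}

/-- `x` has primitive period `m` under `f`. -/
def PrimPeriod (f : ℝ → ℝ) (x : ℝ) (m : ℕ) : Prop :=
  f^[m] x = x ∧ ∀ k : ℕ, 0 < k → k < m → f^[k] x ≠ x

end Necklaces

/-!
Since `π ∘ D = T ∘ π` on `[0,1)` and `π` restricts to the identity on `[0,1/2]`, the point `y`
itself lifts the cycle `C`. The fibre of `π` in `[0,1)` over `t` is `{t, I t}`, so
`Dᵐ y ∈ {y, I y}`; as `I` is an involution commuting with `D`, this gives `D²ᵐ y = y`. The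
`D`-period of `y` is thus a divisor of `2m` and a multiple of the `T`-period `m`. Any periodic lift
has a point over `y` on its cycle, so its cycle is that of `y` or that of `I y`, and the latter is
the `I`-image of the former.
-/

namespace Necklaces

open Function

section Periods

variable {f : ℝ → ℝ} {x : ℝ}

theorem primPeriod_iff_minimalPeriod_eq {m : ℕ} (hm : 0 < m) :
    PrimPeriod f x m ↔ minimalPeriod f x = m := by
  constructor
  · rintro ⟨hfix, hmin⟩
    have hpos : 0 < minimalPeriod f x := IsPeriodicPt.minimalPeriod_pos hm hfix
    refine (IsPeriodicPt.minimalPeriod_le hm hfix).antisymm (not_lt.1 fun hlt => ?_)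
    exact hmin _ hpos hlt iterate_minimalPeriod
  · rintro rfl
    exact ⟨iterate_minimalPeriod, fun _ hk hlt =>
      not_isPeriodicPt_of_pos_of_lt_minimalPeriod hk.ne' hlt⟩

theorem cycleSet_subset_of_mem {z : ℝ} (hz : z ∈ cycleSet f x) : cycleSet f z ⊆ cycleSet f x := by
  obtain ⟨k, rfl⟩ := hz
  rintro _ ⟨j, rfl⟩
  exact ⟨j + k, (iterate_add_apply f j k x).symm⟩

theorem cycleSet_iterate {p : ℕ} (hp : 0 < p) (hx : IsPeriodicPt f p x) (k : ℕ) :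
    cycleSet f (f^[k] x) = cycleSet f x := by
  refine (cycleSet_subset_of_mem ⟨k, rfl⟩).antisymm (cycleSet_subset_of_mem ⟨p * k - k, ?_⟩)
  rw [← iterate_add_apply, Nat.sub_add_cancel (Nat.le_mul_of_pos_left k hp),
    (hx.mul_const k).eq]

theorem image_cycleSet {g π : ℝ → ℝ} (h : ∀ k, π (f^[k] x) = g^[k] (π x)) :
    π '' cycleSet f x = cycleSet g (π x) := by
  ext w
  constructor
  · rintro ⟨_, ⟨k, rfl⟩, rfl⟩
    exact ⟨k, h k⟩
  · rintro ⟨k, rfl⟩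
    exact ⟨f^[k] x, ⟨k, rfl⟩, h k⟩

theorem minimalPeriod_dvd_of_iterate {g π : ℝ → ℝ} (h : ∀ k, π (f^[k] x) = g^[k] (π x)) :
    minimalPeriod g (π x) ∣ minimalPeriod f x :=
  IsPeriodicPt.minimalPeriod_dvd <| by
    rw [IsPeriodicPt, IsFixedPt, ← h, iterate_minimalPeriod]

end Periods

theorem eq_or_eq_two_mul_of_dvd_of_dvd {m p : ℕ} (hp : 0 < p) (hmp : m ∣ p) (hpm : p ∣ 2 * m) :
    p = m ∨ p = 2 * m := by
  obtain ⟨c, rfl⟩ := hmp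
  have hm : 0 < m := Nat.pos_of_mul_pos_right hp
  have hc : c ∣ 2 := Nat.dvd_of_mul_dvd_mul_left hm (by rwa [mul_comm m 2])
  rcases (Nat.dvd_prime Nat.prime_two).1 hc with rfl | rfl
  · exact Or.inl (mul_one m)
  · exact Or.inr (mul_comm m 2)

theorem Dmap_mem_Ico (x : ℝ) : Dmap x ∈ Set.Ico (0 : ℝ) 1 :=
  ⟨Int.fract_nonneg _, Int.fract_lt_one _⟩

theorem iterate_Dmap_mem_Ico {x : ℝ} (hx : x ∈ Set.Ico (0 : ℝ) 1) :
    ∀ k, Dmap^[k] x ∈ Set.Ico (0 : ℝ) 1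
  | 0 => hx
  | k + 1 => by rw [iterate_succ_apply']; exact Dmap_mem_Ico _

theorem Dmap_of_lt_half {x : ℝ} (h0 : 0 ≤ x) (h1 : x < 1 / 2) : Dmap x = 2 * x :=
  Int.fract_eq_self.2 ⟨by linarith, by linarith⟩

theorem Dmap_of_half_le {x : ℝ} (h0 : 1 / 2 ≤ x) (h1 : x < 1) : Dmap x = 2 * x - 1 := by
  rw [Dmap, ← Int.fract_sub_one, Int.fract_eq_self.2 ⟨by linarith, by linarith⟩]

theorem fold_Dmap {x : ℝ} (hx : x ∈ Set.Ico (0 : ℝ) 1) : fold (Dmap x) = Tmap (fold x) := by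
  obtain ⟨h0, h1⟩ := hx
  rcases lt_or_ge x (1 / 2) with hx2 | hx2
  · rw [Dmap_of_lt_half h0 hx2, fold, fold, Tmap, min_eq_left (by linarith : x ≤ 1 - x)]
    split_ifs with h4
    · exact min_eq_left (by linarith)
    · exact min_eq_right (by linarith)
  · rw [Dmap_of_half_le hx2 h1, fold, fold, Tmap, min_eq_right (by linarith : 1 - x ≤ x)]
    split_ifs with h4
    · rw [min_eq_right (by linarith)]; ring
    · rw [min_eq_left (by linarith)]; ring

theorem fold_iterate_Dmap {x : ℝ} (hx : x ∈ Set.Ico (0 : ℝ) 1) (k : ℕ) :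
    fold (Dmap^[k] x) = Tmap^[k] (fold x) := by
  induction k with
  | zero => rfl
  | succ k ih =>
    rw [iterate_succ_apply', iterate_succ_apply', fold_Dmap (iterate_Dmap_mem_Ico hx k), ih]

theorem fold_of_le_half {y : ℝ} (hy : y ≤ 1 / 2) : fold y = y :=
  min_eq_left (by linarith)

theorem Imap_commute_Dmap : Function.Commute Imap Dmap := by
  intro x
  by_cases hx : x = 0
  · simp [hx, Imap, Dmap]
  have hD : Dmap (1 - x) = Int.fract (-(2 * x)) := by
    rw [Dmap, show 2 * (1 - x) = -(2 * x) + ((2 : ℤ) : ℝ) by push_cast; ring,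
      Int.fract_add_intCast]
  unfold Imap
  rw [if_neg hx, hD, Dmap]
  split_ifs with hf
  · rw [Int.fract_neg_eq_zero.2 hf]
  · rw [Int.fract_neg hf]

theorem Imap_Imap {x : ℝ} (hx : x ≠ 1) : Imap (Imap x) = x := by
  by_cases h0 : x = 0
  · simp [Imap, h0]
  · have h1 : 1 - x ≠ 0 := sub_ne_zero.2 (Ne.symm hx)
    simp only [Imap, if_neg h0, if_neg h1, sub_sub_cancel]

theorem eq_or_eq_Imap_of_fold_eq {z y : ℝ} (hz : z < 1) (h : fold z = y) : z = y ∨ z = Imap y := by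
  rcases le_total z (1 - z) with hle | hle
  · exact Or.inl (by rwa [fold, min_eq_left hle] at h)
  · rw [fold, min_eq_right hle] at h
    have hy0 : y ≠ 0 := by linarith
    exact Or.inr (by rw [Imap, if_neg hy0]; linarith)

theorem image_Imap_cycleSet (z : ℝ) : Imap '' cycleSet Dmap z = cycleSet Dmap (Imap z) :=
  image_cycleSet fun k => (Imap_commute_Dmap.iterate_right k).eq z

theorem cycleSet_Dmap_eq_or_eq_Imap {x y : ℝ} (hx : x ∈ Set.Ico (0 : ℝ) 1) {p : ℕ} (hp : 0 < p)
    (hper : IsPeriodicPt Dmap p x) (hy : y ∈ fold '' cycleSet Dmap x) :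
    cycleSet Dmap x = cycleSet Dmap y ∨ cycleSet Dmap x = cycleSet Dmap (Imap y) := by
  obtain ⟨_, ⟨k, rfl⟩, hk⟩ := hy
  rw [← cycleSet_iterate hp hper k]
  rcases eq_or_eq_Imap_of_fold_eq (iterate_Dmap_mem_Ico hx k).2 hk with h | h <;> simp [h]

theorem primPeriod_Dmap_of_primPeriod_Tmap {m : ℕ} (hm : 0 < m) {y : ℝ}
    (hy : y ∈ Set.Icc (0 : ℝ) (1 / 2)) (hper : PrimPeriod Tmap y m) :
    PrimPeriod Dmap y m ∨ PrimPeriod Dmap y (2 * m) := by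
  have hyI : y ∈ Set.Ico (0 : ℝ) 1 := ⟨hy.1, by linarith [hy.2]⟩
  have hfoldy : fold y = y := fold_of_le_half hy.2
  have hfold : ∀ k, fold (Dmap^[k] y) = Tmap^[k] (fold y) := fold_iterate_Dmap hyI
  have hDm : Dmap^[m] y = y ∨ Dmap^[m] y = Imap y :=
    eq_or_eq_Imap_of_fold_eq (iterate_Dmap_mem_Ico hyI m).2 (by rw [hfold, hfoldy, hper.1])
  have h2m : IsPeriodicPt Dmap (2 * m) y := by
    rw [IsPeriodicPt, IsFixedPt, two_mul, iterate_add_apply]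
    rcases hDm with h | h
    · rw [h, h]
    · rw [h, ← (Imap_commute_Dmap.iterate_right m).eq, h, Imap_Imap (by linarith [hy.2])]
  have hdvd : m ∣ minimalPeriod Dmap y := by
    simpa only [hfoldy, (primPeriod_iff_minimalPeriod_eq hm).1 hper] using
      minimalPeriod_dvd_of_iterate hfold
  rcases eq_or_eq_two_mul_of_dvd_of_dvd (h2m.minimalPeriod_pos (by omega)) hdvd
    h2m.minimalPeriod_dvd with h | h
  · exact Or.inl ((primPeriod_iff_minimalPeriod_eq hm).2 h)
  · exact Or.inr ((primPeriod_iff_minimalPeriod_eq (by omega)).2 h)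

/-- Let `y ∈ [0,1/2]` have primitive period `m` under the tent map `T`,
with `T`-cycle `C`. Then there exists `x ∈ [0,1)`, periodic under the doubling map `D`
with primitive period `m` or `2m`, whose `D`-cycle is mapped onto `C` by the folding map
`π`; moreover, any two `D`-cycles of `D`-periodic points with this property either
coincide or are mapped to each other by the involution `I`. -/
theorem tent_cycle_lifts (m : ℕ) (hm : 0 < m) (y : ℝ) (hy : y ∈ Set.Icc (0 : ℝ) (1 / 2))
    (hper : PrimPeriod Tmap y m) :
    (∃ x : ℝ, x ∈ Set.Ico (0 : ℝ) 1 ∧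
      (PrimPeriod Dmap x m ∨ PrimPeriod Dmap x (2 * m)) ∧
      fold '' cycleSet Dmap x = cycleSet Tmap y) ∧
    (∀ x₁ x₂ : ℝ, x₁ ∈ Set.Ico (0 : ℝ) 1 → x₂ ∈ Set.Ico (0 : ℝ) 1 →
      (∃ p : ℕ, 0 < p ∧ Dmap^[p] x₁ = x₁) → (∃ p : ℕ, 0 < p ∧ Dmap^[p] x₂ = x₂) →
      fold '' cycleSet Dmap x₁ = cycleSet Tmap y →
      fold '' cycleSet Dmap x₂ = cycleSet Tmap y →
      (cycleSet Dmap x₁ = cycleSet Dmap x₂ ∨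
        cycleSet Dmap x₂ = Imap '' cycleSet Dmap x₁)) := by
  have hyI : y ∈ Set.Ico (0 : ℝ) 1 := ⟨hy.1, by linarith [hy.2]⟩
  refine ⟨⟨y, hyI, primPeriod_Dmap_of_primPeriod_Tmap hm hy hper, ?_⟩, ?_⟩
  · rw [image_cycleSet (fold_iterate_Dmap hyI), fold_of_le_half hy.2]
  · rintro x₁ x₂ hx₁ hx₂ ⟨p₁, hp₁, hper₁⟩ ⟨p₂, hp₂, hper₂⟩ hf₁ hf₂
    have hy_mem : y ∈ cycleSet Tmap y := ⟨0, rfl⟩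
    rcases cycleSet_Dmap_eq_or_eq_Imap hx₁ hp₁ hper₁ (hf₁ ▸ hy_mem) with h₁ | h₁ <;>
    rcases cycleSet_Dmap_eq_or_eq_Imap hx₂ hp₂ hper₂ (hf₂ ▸ hy_mem) with h₂ | h₂
    · exact Or.inl (h₁.trans h₂.symm)
    · exact Or.inr (by rw [h₁, h₂, image_Imap_cycleSet])
    · exact Or.inr (by rw [h₁, h₂, image_Imap_cycleSet, Imap_Imap (by linarith [hy.2])])
    · exact Or.inl (h₁.trans h₂.symm)

end Necklaces
end
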